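/- Let A be a positive definite matrix of order m+n with SVD A = UΛUᵀ, where m,n ∈ ℕ₊, n = l·m, U is orthogonal, Λ = diag(cλ·1ₘ, λ·1ₙ), c ≥ 1, λ > 0. Let s ∈ ℝ, let t > 0 with k := tc > 0, assume l = (c/t)^s, and let ΔΛ = diag(0ₘ, (tc−1)λ·1ₙ). Define B := (UΛUᵀ)^s and ΔB := (U(Λ+ΔΛ)Uᵀ)^s − B. Then ‖ΔB‖_F / ‖B‖_F = |k^s − 1| / √(k^s + 1) and ⟨B, B+ΔB⟩ / (‖B‖_F · ‖B+ΔB‖_F) = 2 / √(2 + k^s + 1/k^s). -/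
import Mathlib


open Matrix

/-- Frobenius norm of a real matrix. -/
noncomputable def frobNorm {m n : Type*} [Fintype m] [Fintype n] (A : Matrix m n ℝ) : ℝ :=
  Real.sqrt (∑ i, ∑ j, (A i j) ^ 2)

/-- Frobenius inner product `⟨A, B⟩ = tr(AᵀB)`. -/
noncomputable def frobInner {m n : Type*} [Fintype m] [Fintype n] (A B : Matrix m n ℝ) : ℝ :=
  (Aᵀ * B).trace


lemma frobNorm_eq_sqrt_inner {m : Type*} [Fintype m] (A : Matrix m m ℝ) :
    frobNorm A = Real.sqrt (frobInner A A) := by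
  unfold frobNorm frobInner
  congr 1
  simp only [Matrix.trace, Matrix.diag, Matrix.mul_apply, Matrix.transpose_apply, sq]
  rw [Finset.sum_comm]

lemma conj_inner {N : Type*} [Fintype N] [DecidableEq N] (U : Matrix N N ℝ)
    (hU : Uᵀ * U = 1) (f g : N → ℝ) :
    frobInner (U * diagonal f * Uᵀ) (U * diagonal g * Uᵀ) = ∑ i, f i * g i := by
  unfold frobInner
  have h1 : (U * diagonal f * Uᵀ)ᵀ * (U * diagonal g * Uᵀ)
      = U * (diagonal fun i => f i * g i) * Uᵀ := by
    rw [transpose_mul, transpose_mul, transpose_transpose, diagonal_transpose]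
    calc U * (diagonal f * Uᵀ) * (U * diagonal g * Uᵀ)
        = U * (diagonal f * ((Uᵀ * U) * (diagonal g * Uᵀ))) := by
          simp [Matrix.mul_assoc]
      _ = U * (diagonal fun i => f i * g i) * Uᵀ := by
          rw [hU, Matrix.one_mul, ← Matrix.mul_assoc (diagonal f), diagonal_mul_diagonal]
          simp [Matrix.mul_assoc]
  rw [h1, Matrix.trace_mul_cycle, hU, Matrix.one_mul, Matrix.trace_diagonal]

/-- For `A = U Λ Uᵀ` of order `m + n` (`n = l·m`) with singular values `cλ`
(multiplicity `m`) and `λ` (multiplicity `n`), rescaling the smaller singular value to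
`tcλ = kλ` with `l = (c/t)^s` gives `‖ΔB‖_F/‖B‖_F = |k^s−1|/√(k^s+1)` and cosine
`2/√(2 + k^s + 1/k^s)`. -/
theorem singular_value_perturbation_balanced_case
    {m n : ℕ} (hm : 0 < m) (hn : 0 < n) (l : ℝ) (hl : (n : ℝ) = l * m)
    (c lam t k s : ℝ) (hc : 1 ≤ c) (hlam : 0 < lam) (ht : 0 < t)
    (hk : k = t * c) (hkpos : 0 < k) (hls : l = (c / t) ^ s)
    (U : Matrix (Fin m ⊕ Fin n) (Fin m ⊕ Fin n) ℝ)
    (hU : Uᵀ * U = 1)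
    (A : Matrix (Fin m ⊕ Fin n) (Fin m ⊕ Fin n) ℝ)
    (hA : A = U * Matrix.diagonal
      (Sum.elim (fun _ => c * lam) (fun _ => lam)) * Uᵀ)
    (hApd : A.PosDef)
    (B ΔB : Matrix (Fin m ⊕ Fin n) (Fin m ⊕ Fin n) ℝ)
    (hB : B = U * Matrix.diagonal
      (Sum.elim (fun _ => (c * lam) ^ s) (fun _ => lam ^ s)) * Uᵀ)
    (hΔB : ΔB = U * Matrix.diagonal
      (Sum.elim (fun _ => (c * lam) ^ s) (fun _ => (t * c * lam) ^ s)) * Uᵀ - B) :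
    frobNorm ΔB / frobNorm B = |k ^ s - 1| / Real.sqrt (k ^ s + 1) ∧
      frobInner B (B + ΔB) / (frobNorm B * frobNorm (B + ΔB)) =
        2 / Real.sqrt (2 + k ^ s + 1 / k ^ s) := by
  have hc0 : (0:ℝ) < c := lt_of_lt_of_le one_pos hc
  have hBΔ : B + ΔB = U * Matrix.diagonal
      (Sum.elim (fun _ => (c * lam) ^ s) (fun _ => (t * c * lam) ^ s)) * Uᵀ := by
    rw [hΔB]; abel
  have hΔB' : ΔB = U * Matrix.diagonal
      (Sum.elim (fun _ => (0:ℝ)) (fun _ => (t * c * lam) ^ s - lam ^ s)) * Uᵀ := by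
    rw [hΔB, hB, ← Matrix.sub_mul, ← Matrix.mul_sub, Matrix.diagonal_sub]
    have : (fun i => (Sum.elim (fun _ => (c * lam) ^ s) (fun _ => (t * c * lam) ^ s)) i
        - (Sum.elim (fun _ => (c * lam) ^ s) (fun _ => lam ^ s)) i)
        = Sum.elim (fun _ : Fin m => (0:ℝ)) (fun _ : Fin n => (t * c * lam) ^ s - lam ^ s) := by
      funext i; cases i <;> simp
    rw [this]
  -- rpow facts
  have hcs : (c * lam) ^ s = c ^ s * lam ^ s := Real.mul_rpow hc0.le hlam.le
  have hks : (t * c * lam) ^ s = k ^ s * lam ^ s := by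
    rw [← hk, Real.mul_rpow hkpos.le hlam.le]
  have hKts : k ^ s = t ^ s * c ^ s := by rw [hk, Real.mul_rpow ht.le hc0.le]
  have hlcs : l = c ^ s / t ^ s := by rw [hls, Real.div_rpow hc0.le ht.le]
  have ha2 : (0:ℝ) < lam ^ s := Real.rpow_pos_of_pos hlam s
  have hcsp : (0:ℝ) < c ^ s := Real.rpow_pos_of_pos hc0 s
  have htsp : (0:ℝ) < t ^ s := Real.rpow_pos_of_pos ht s
  have hKp : (0:ℝ) < k ^ s := Real.rpow_pos_of_pos hkpos s
  have hmp : (0:ℝ) < (m:ℝ) := Nat.cast_pos.mpr hm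
  -- sums
  have hXB : frobInner B B = (m:ℝ) * ((c*lam)^s)^2 + (n:ℝ) * ((lam^s))^2 := by
    rw [hB, conj_inner U hU]
    simp [Fintype.sum_sum_type, sq, mul_comm]
  have hZB : frobInner ΔB ΔB = (n:ℝ) * ((t*c*lam)^s - lam^s)^2 := by
    rw [hΔB', conj_inner U hU]
    simp [Fintype.sum_sum_type, sq, mul_comm]
  have hWB : frobInner B (B + ΔB) =
      (m:ℝ) * ((c*lam)^s)^2 + (n:ℝ) * (lam^s * (t*c*lam)^s) := by
    rw [hBΔ, hB, conj_inner U hU]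
    simp [Fintype.sum_sum_type, sq, mul_comm]
  have hYB : frobInner (B + ΔB) (B + ΔB) =
      (m:ℝ) * ((c*lam)^s)^2 + (n:ℝ) * ((t*c*lam)^s)^2 := by
    rw [hBΔ, conj_inner U hU]
    simp [Fintype.sum_sum_type, sq, mul_comm]
  -- closed forms
  have hX : frobInner B B = (m:ℝ) * (lam^s)^2 * (c^s/t^s) * (k^s + 1) := by
    rw [hXB, hl, hlcs, hcs, hKts]; field_simp
  have hZ : frobInner ΔB ΔB = (m:ℝ) * (lam^s)^2 * (c^s/t^s) * (k^s - 1)^2 := by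
    rw [hZB, hl, hlcs, hks]; field_simp
  have hW : frobInner B (B + ΔB) = 2 * ((m:ℝ) * (lam^s)^2 * (c^s)^2) := by
    rw [hWB, hl, hlcs, hcs, hks, hKts]; field_simp; ring
  have hY : frobInner (B + ΔB) (B + ΔB) = (m:ℝ) * (lam^s)^2 * (c^s)^2 * (k^s + 1) := by
    rw [hYB, hl, hlcs, hcs, hks, hKts]; field_simp; ring
  have hXpos : 0 < frobInner B B := by rw [hX]; positivity
  have hK1 : (0:ℝ) < k ^ s + 1 := by linarith
  constructor
  · -- part 1
    have hZX : frobInner ΔB ΔB = frobInner B B * ((k^s - 1)^2 / (k^s + 1)) := by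
      rw [hZ, hX]; field_simp
    rw [frobNorm_eq_sqrt_inner, frobNorm_eq_sqrt_inner, hZX,
      Real.sqrt_mul hXpos.le, Real.sqrt_div (sq_nonneg _), Real.sqrt_sq_eq_abs,
      mul_comm, mul_div_assoc, div_self (Real.sqrt_ne_zero'.mpr hXpos), mul_one]
  · -- part 2
    set r := Real.sqrt (k ^ s) with hr
    have hr2 : r ^ 2 = k ^ s := Real.sq_sqrt hKp.le
    have hrpos : 0 < r := Real.sqrt_pos.mpr hKp
    have hXY : frobInner B B * frobInner (B + ΔB) (B + ΔB)
        = (((m:ℝ) * (lam^s)^2 * (c^s)^2 * (k^s + 1)) / r)^2 := by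
      rw [hX, hY, div_pow, hr2, hKts]; field_simp
    have e1 : frobNorm B * frobNorm (B + ΔB)
        = ((m:ℝ) * (lam^s)^2 * (c^s)^2 * (k^s + 1)) / r := by
      rw [frobNorm_eq_sqrt_inner, frobNorm_eq_sqrt_inner, ← Real.sqrt_mul hXpos.le, hXY,
        Real.sqrt_sq (by positivity)]
    have e2 : Real.sqrt (2 + k^s + 1/k^s) = (k^s + 1) / r := by
      rw [show 2 + k^s + 1/k^s = ((k^s + 1)/r)^2 by
        rw [div_pow, hr2]; field_simp; ring]
      exact Real.sqrt_sq (by positivity)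
    rw [hW, e1, e2]
    have hPne : ((m:ℝ) * (lam^s)^2 * (c^s)^2) ≠ 0 := by positivity
    field_simp
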